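/- For x ∈ (-1,1), the function y(t) = (3/(3x^2+1))((t^2 - x^2)/2 - |t - x|) + 1 satisfies ∫_{-1}^{1} y(t) dt = 0, y(x) = 1, and ∫_{-1}^{1} |y'(t)|^2 dt = 6/(3x^2+1), so equality holds in |y(x)|^2 = ((1+3x^2)/6) ∫_{-1}^{1} |y'(t)|^2 dt. -/

import Mathlib

/-!
Both integrals are computed by splitting `[-1, 1]` at the kink `x` of `y`, where `y'` jumps:
on either side the integrands are polynomials.
-/

open MeasureTheory Set

namespace intervalIntegral

variable {f g : ℝ → ℝ} {a b x : ℝ}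

theorem integral_ite_lt (hax : a ≤ x) (hxb : x ≤ b)
    (hf : IntervalIntegrable f volume a x) (hg : IntervalIntegrable g volume x b) :
    ∫ t in a..b, (if t < x then f t else g t) = (∫ t in a..x, f t) + ∫ t in x..b, g t := by
  have hleft : EqOn f (fun t => if t < x then f t else g t) (uIoo a x) := by
    intro t ht
    rw [uIoo_of_le hax] at ht
    simp [ht.2]
  have hright : EqOn g (fun t => if t < x then f t else g t) (uIoo x b) := by
    intro t ht
    rw [uIoo_of_le hxb] at ht
    simp [ht.1.not_gt]
  rw [← integral_add_adjacent_intervals (hf.congr_uIoo hleft) (hg.congr_uIoo hright),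
    integral_congr_uIoo hleft.symm, integral_congr_uIoo hright.symm]

end intervalIntegral

open intervalIntegral

theorem integral_abs_sub {a b x : ℝ} (hax : a ≤ x) (hxb : x ≤ b) :
    ∫ t in a..b, |t - x| = ((x - a) ^ 2 + (b - x) ^ 2) / 2 := by
  have habs : (fun t => |t - x|) = fun t => if t < x then x - t else t - x := by
    ext t
    split_ifs with h
    · rw [abs_of_neg (sub_neg.2 h), neg_sub]
    · rw [abs_of_nonneg (sub_nonneg.2 (not_lt.1 h))]
  rw [habs, integral_ite_lt hax hxb
    ((by fun_prop : Continuous _).intervalIntegrable _ _)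
    ((by fun_prop : Continuous _).intervalIntegrable _ _),
    integral_comp_sub_left (fun t => t), integral_comp_sub_right (fun t => t)]
  simp only [sub_self, integral_id, ne_eq, OfNat.ofNat_ne_zero, not_false_eq_true, zero_pow,
    sub_zero]
  ring

theorem integral_sq_sub_ite_lt {a b x : ℝ} (hax : a ≤ x) (hxb : x ≤ b) :
    ∫ t in a..b, (t - if t < x then -1 else 1) ^ 2 =
      ((x + 1) ^ 3 - (a + 1) ^ 3 + (b - 1) ^ 3 - (x - 1) ^ 3) / 3 := by
  have hsq : (fun t => (t - if t < x then -1 else 1) ^ 2) =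
      fun t => if t < x then (t + 1) ^ 2 else (t - 1) ^ 2 := by
    ext t
    split_ifs <;> ring
  rw [hsq, integral_ite_lt hax hxb
    ((by fun_prop : Continuous _).intervalIntegrable _ _)
    ((by fun_prop : Continuous _).intervalIntegrable _ _),
    integral_comp_add_right (fun t => t ^ 2), integral_comp_sub_right (fun t => t ^ 2)]
  simp only [integral_pow, Nat.reduceAdd, Nat.cast_ofNat]
  ring

theorem extremal_m1 (x : ℝ) (hx : x ∈ Set.Ioo (-1:ℝ) 1) :
    let y : ℝ → ℝ := fun t => 3 / (3 * x ^ 2 + 1) * ((t ^ 2 - x ^ 2) / 2 - |t - x|) + 1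
    let y' : ℝ → ℝ := fun t => 3 / (3 * x ^ 2 + 1) * (t - (if t < x then -1 else 1))
    (∫ t in (-1:ℝ)..1, y t) = 0 ∧ y x = 1 ∧
    (∫ t in (-1:ℝ)..1, (y' t) ^ 2) = 6 / (3 * x ^ 2 + 1) ∧
    (y x) ^ 2 = (1 + 3 * x ^ 2) / 6 * ∫ t in (-1:ℝ)..1, (y' t) ^ 2 := by
  intro y y'
  have hy_int : ∫ t in (-1:ℝ)..1, y t = 0 := by
    have hquad : IntervalIntegrable (fun t : ℝ => (t ^ 2 - x ^ 2) / 2) volume (-1) 1 :=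
      (by fun_prop : Continuous _).intervalIntegrable _ _
    have habs : IntervalIntegrable (fun t : ℝ => |t - x|) volume (-1) 1 :=
      (by fun_prop : Continuous _).intervalIntegrable _ _
    have hquad_int : ∫ t in (-1:ℝ)..1, (t ^ 2 - x ^ 2) / 2 = 1 / 3 - x ^ 2 := by
      norm_num
      ring
    rw [intervalIntegral.integral_add ((hquad.sub habs).const_mul _) intervalIntegrable_const,
      intervalIntegral.integral_const_mul, intervalIntegral.integral_sub hquad habs, hquad_int,
      integral_abs_sub hx.1.le hx.2.le, intervalIntegral.integral_const]
    field_simp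
    ring
  have hyx : y x = 1 := by simp [y]
  have hy'_int : ∫ t in (-1:ℝ)..1, y' t ^ 2 = 6 / (3 * x ^ 2 + 1) := by
    simp only [y', mul_pow]
    rw [intervalIntegral.integral_const_mul, integral_sq_sub_ite_lt hx.1.le hx.2.le]
    field_simp
    ring
  refine ⟨hy_int, hyx, hy'_int, ?_⟩
  rw [hyx, hy'_int]
  field_simp
  ring
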